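/- arXiv:0909.1097 — 2 statements merged into one kernel-verified Lean document; each statement's English description precedes it below -/
import Mathlib

section
/- Let μ be a compactly supported probability measure on ℝ with ∫ x dμ = 0 and ∫ x² dμ = 1, and let p, q ∈ ℝ[x], not both zero. Suppose the operator Q[f] = p · L_μ[L_μ[f]] + q · L_μ[f] on ℝ[x] has a polynomial system of eigenfunctions (P_n)_{n≥0} that are orthogonal with respect to μ, i.e. ∫ P_n P_m dμ = 0 for all n ≠ m. Then p is a nonzero constant a, q(x) = −a x, and the moments m_k = ∫ x^k dμ satisfy m_n = Σ_{i=0}^{n−2} m_i m_{n−2−i} for all n ≥ 2; equivalently, m_{2k} is the k-th Catalan number and m_{2k+1} = 0 for all k ≥ 0, so μ has the moments of the standard semicircular distribution. -/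
open MeasureTheory Polynomial

/-- Moments of a measure on ℝ. -/
noncomputable def mom (ρ : Measure ℝ) (k : ℕ) : ℝ := ∫ x, x ^ k ∂ρ

/-- The operator `L_ρ` on polynomials, defined via the moment sequence `m` of `ρ`:
`L[x^n] = Σ_{k=0}^{n-1} m_{n-1-k} x^k`. -/
noncomputable def Lop (m : ℕ → ℝ) (f : Polynomial ℝ) : Polynomial ℝ :=
  f.sum fun n a => C a * ∑ k ∈ Finset.range n, C (m (n - 1 - k)) * X ^ k

/-- A measure has compact support. -/
def CompactSupp (μ : Measure ℝ) : Prop := ∃ K : Set ℝ, IsCompact K ∧ μ Kᶜ = 0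

lemma coeff_T (m : ℕ → ℝ) (n k : ℕ) :
    (∑ j ∈ Finset.range n, C (m (n - 1 - j)) * X ^ j).coeff k
      = if k < n then m (n - 1 - k) else 0 := by
  rw [finset_sum_coeff]
  simp only [coeff_C_mul, coeff_X_pow, mul_ite, mul_one, mul_zero]
  rw [Finset.sum_ite_eq (Finset.range n) k (fun j => m (n - 1 - j))]
  simp [Finset.mem_range]

lemma coeff_Lop (m : ℕ → ℝ) (f : Polynomial ℝ) (k N : ℕ) (h : f.natDegree ≤ k + N) :
    (Lop m f).coeff k = ∑ j ∈ Finset.range N, f.coeff (k + 1 + j) * m j := by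
  unfold Lop
  rw [coeff_sum]
  rw [Polynomial.sum_over_range' f (by simp) (k + 1 + N) (by omega)]
  simp only [coeff_C_mul, coeff_T]
  have : ∀ n ∈ Finset.range (k + 1 + N),
      f.coeff n * (if k < n then m (n - 1 - k) else 0)
        = if k + 1 ≤ n then f.coeff n * m (n - 1 - k) else 0 := by
    intro n _
    by_cases hn : k < n
    · rw [if_pos hn, if_pos (by omega : k + 1 ≤ n)]
    · rw [if_neg hn, if_neg (by omega : ¬ k + 1 ≤ n), mul_zero]
  rw [Finset.sum_congr rfl this, Finset.range_eq_Ico,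
    ← Finset.sum_Ico_consecutive _ (Nat.zero_le (k+1)) (by omega : k + 1 ≤ k + 1 + N)]
  have h1 : ∑ x ∈ Finset.Ico 0 (k+1), (if k + 1 ≤ x then f.coeff x * m (x - 1 - k) else 0) = 0 := by
    apply Finset.sum_eq_zero
    intro x hx
    rw [Finset.mem_Ico] at hx
    rw [if_neg (by omega)]
  have h2 : ∑ x ∈ Finset.Ico (k+1) (k+1+N), (if k + 1 ≤ x then f.coeff x * m (x - 1 - k) else 0)
      = ∑ j ∈ Finset.range N, f.coeff (k + 1 + j) * m j := by
    rw [Finset.sum_Ico_eq_sum_range]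
    have hN : k + 1 + N - (k + 1) = N := by omega
    rw [hN]
    apply Finset.sum_congr rfl
    intro j _
    rw [if_pos (by omega), show k + 1 + j - 1 - k = j by omega]
  rw [h1, h2, zero_add, Finset.range_eq_Ico]

lemma coeff_Lop_zero (m : ℕ → ℝ) (f : Polynomial ℝ) (k : ℕ) (h : f.natDegree ≤ k) :
    (Lop m f).coeff k = 0 := by
  rw [coeff_Lop m f k 0 (by omega)]; simp

lemma natDegree_Lop_le (m : ℕ → ℝ) (f : Polynomial ℝ) : (Lop m f).natDegree ≤ f.natDegree := by
  rw [natDegree_le_iff_coeff_eq_zero]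
  intro N hN
  exact coeff_Lop_zero m f N (le_of_lt hN)

lemma integrable_pow_cs (μ : Measure ℝ) [IsProbabilityMeasure μ] (hcs : CompactSupp μ) (j : ℕ) :
    Integrable (fun x : ℝ => x ^ j) μ := by
  obtain ⟨K, hK, hK0⟩ := hcs
  obtain ⟨R, hR⟩ := hK.isBounded.subset_closedBall 0
  apply Integrable.mono' (g := fun _ => (max R 0) ^ j) (integrable_const _)
  · exact (measurable_id.pow_const j).aestronglyMeasurable
  · have : Kᶜ ∈ {s | μ s = 0} := hK0
    have hae : ∀ᵐ x ∂μ, x ∈ K := by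
      rw [MeasureTheory.ae_iff]
      apply measure_mono_null _ hK0
      intro x hx
      simpa using hx
    filter_upwards [hae] with x hx
    have hx' : |x| ≤ R := by
      have := hR hx
      simpa [Metric.mem_closedBall, Real.dist_eq] using this
    have : |x| ≤ max R 0 := le_trans hx' (le_max_left _ _)
    calc ‖x ^ j‖ = |x| ^ j := by rw [Real.norm_eq_abs, abs_pow]
    _ ≤ (max R 0) ^ j := pow_le_pow_left₀ (abs_nonneg x) this j

lemma integral_poly (μ : Measure ℝ) [IsProbabilityMeasure μ] (hcs : CompactSupp μ)
    (f : Polynomial ℝ) :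
    ∫ x, f.eval x ∂μ = ∑ j ∈ Finset.range (f.natDegree + 1), f.coeff j * mom μ j := by
  have h1 : ∀ x : ℝ, f.eval x = ∑ j ∈ Finset.range (f.natDegree + 1), f.coeff j * x ^ j :=
    fun x => eval_eq_sum_range x
  rw [integral_congr_ae (Filter.Eventually.of_forall h1)]
  rw [integral_finset_sum _ (fun j _ => (integrable_pow_cs μ hcs j).const_mul (f.coeff j))]
  exact Finset.sum_congr rfl fun j _ => by rw [integral_const_mul]; rfl

lemma sum_range_even_split (F : ℕ → ℝ) (k : ℕ) :
    ∑ i ∈ Finset.range (2 * k), F i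
      = ∑ j ∈ Finset.range k, F (2 * j) + ∑ j ∈ Finset.range k, F (2 * j + 1) := by
  induction k with
  | zero => simp
  | succ t ih =>
    rw [show 2 * (t + 1) = 2 * t + 1 + 1 by ring, Finset.sum_range_succ, Finset.sum_range_succ,
      ih, Finset.sum_range_succ, Finset.sum_range_succ]
    ring

lemma sum_range_odd_split (F : ℕ → ℝ) (k : ℕ) :
    ∑ i ∈ Finset.range (2 * k + 1), F i
      = ∑ j ∈ Finset.range (k + 1), F (2 * j) + ∑ j ∈ Finset.range k, F (2 * j + 1) := by
  rw [Finset.sum_range_succ, sum_range_even_split, Finset.sum_range_succ]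
  ring

lemma catalan_of_rec (m : ℕ → ℝ) (h0 : m 0 = 1) (h1 : m 1 = 0)
    (hrec : ∀ n : ℕ, 2 ≤ n → m n = ∑ i ∈ Finset.range (n - 1), m i * m (n - 2 - i)) :
    ∀ k : ℕ, m (2 * k) = (catalan k : ℝ) ∧ m (2 * k + 1) = 0 := by
  intro k
  induction k using Nat.strong_induction_on with
  | _ k ih =>
    match k with
    | 0 => exact ⟨by simpa using h0, by simpa using h1⟩
    | (t + 1) =>
      constructor
      · have h := hrec (2 * (t + 1)) (by omega)
        rw [show 2 * (t + 1) - 1 = 2 * t + 1 by omega] at h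
        rw [h, sum_range_odd_split]
        have e1 : ∀ j ∈ Finset.range (t + 1),
            m (2 * j) * m (2 * (t + 1) - 2 - 2 * j) = (catalan j : ℝ) * (catalan (t - j) : ℝ) := by
          intro j hj
          rw [Finset.mem_range] at hj
          rw [(ih j (by omega)).1, show 2 * (t + 1) - 2 - 2 * j = 2 * (t - j) by omega,
            (ih (t - j) (by omega)).1]
        have e2 : ∀ j ∈ Finset.range t,
            m (2 * j + 1) * m (2 * (t + 1) - 2 - (2 * j + 1)) = 0 := by
          intro j hj
          rw [Finset.mem_range] at hj
          rw [(ih j (by omega)).2, zero_mul]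
        rw [Finset.sum_congr rfl e1, Finset.sum_congr rfl e2, Finset.sum_const_zero, add_zero]
        have : (catalan (t+1) : ℝ) = ∑ j ∈ Finset.range (t + 1), (catalan j : ℝ) * (catalan (t - j) : ℝ) := by
          rw [catalan_succ, ← Fin.sum_univ_eq_sum_range (fun i => (catalan i : ℝ) * (catalan (t - i) : ℝ))]
          push_cast
          rfl
        rw [this]
      · have h := hrec (2 * (t + 1) + 1) (by omega)
        rw [show 2 * (t + 1) + 1 - 1 = 2 * (t + 1) by omega] at h
        rw [h, sum_range_even_split]
        have e1 : ∀ j ∈ Finset.range (t + 1),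
            m (2 * j) * m (2 * (t + 1) + 1 - 2 - 2 * j) = 0 := by
          intro j hj
          rw [Finset.mem_range] at hj
          rw [show 2 * (t + 1) + 1 - 2 - 2 * j = 2 * (t - j) + 1 by omega,
            (ih (t - j) (by omega)).2, mul_zero]
        have e2 : ∀ j ∈ Finset.range (t + 1),
            m (2 * j + 1) * m (2 * (t + 1) + 1 - 2 - (2 * j + 1)) = 0 := by
          intro j hj
          rw [Finset.mem_range] at hj
          rw [(ih j (by omega)).2, zero_mul]
        rw [Finset.sum_congr rfl e1, Finset.sum_congr rfl e2]
        simp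

lemma conv_sum (c g : ℕ → ℝ) (n : ℕ) (hn : 2 ≤ n) (hc : ∀ s : ℕ, n - 2 < s → c (3 + s) = 0) :
    ∑ j ∈ Finset.range n, ∑ i ∈ Finset.range n, c (3 + j + i) * (g i * g j)
      = ∑ s ∈ Finset.range (n - 1), c (3 + s) * ∑ i ∈ Finset.range (s + 1), g i * g (s - i) := by
  have hR : ∀ s, c (3 + s) * ∑ i ∈ Finset.range (s + 1), g i * g (s - i)
      = ∑ i ∈ Finset.range (s + 1), c (3 + s) * (g i * g (s - i)) := by
    intro s; rw [Finset.mul_sum]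
  rw [Finset.sum_congr rfl (fun s _ => hR s)]
  rw [Finset.sum_sigma' (Finset.range (n-1)) (fun s => Finset.range (s+1))
    (fun s i => c (3 + s) * (g i * g (s - i)))]
  rw [← Finset.sum_product' (f := fun j i => c (3 + j + i) * (g i * g j))]
  rw [← Finset.sum_filter_of_ne (p := fun x => x.1 + x.2 ≤ n - 2)
    (by
      intro x hx hne
      by_contra hgt
      exact hne (by rw [show 3 + x.1 + x.2 = 3 + (x.1 + x.2) by ring, hc (x.1 + x.2) (by omega), zero_mul]) )]
  apply Finset.sum_nbij' (i := fun x => (⟨x.1 + x.2, x.2⟩ : (s : ℕ) × ℕ))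
    (j := fun y => ((y.1 - y.2 : ℕ), (y.2 : ℕ)))
  · intro x hx
    simp only [Finset.mem_filter, Finset.mem_product, Finset.mem_range] at hx
    simp only [Finset.mem_sigma, Finset.mem_range]
    omega
  · intro y hy
    simp only [Finset.mem_sigma, Finset.mem_range] at hy
    simp only [Finset.mem_filter, Finset.mem_product, Finset.mem_range]
    omega
  · intro x hx
    simp only [Finset.mem_filter, Finset.mem_product, Finset.mem_range] at hx
    simp only
    congr 1 <;> omega
  · intro y hy
    simp only [Finset.mem_sigma, Finset.mem_range] at hy
    have h1 : y.fst - y.snd + y.snd = y.fst := by omega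
    calc (⟨y.fst - y.snd + y.snd, y.snd⟩ : (s : ℕ) × ℕ) = ⟨y.fst, y.snd⟩ := by rw [h1]
    _ = y := rfl
  · intro x hx
    simp only [Finset.mem_filter, Finset.mem_product, Finset.mem_range] at hx
    simp only
    rw [show 3 + (x.1 + x.2) = 3 + x.1 + x.2 by ring, show x.1 + x.2 - x.2 = x.1 by omega]

lemma Lop_C (m : ℕ → ℝ) (b : ℝ) : Lop m (C b) = 0 := by
  apply Polynomial.ext
  intro k
  rw [coeff_Lop_zero m _ k (by simp [natDegree_C])]
  simp

lemma natDegree_CX_le (a b : ℝ) : (C b + C a * X).natDegree ≤ 1 :=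
  le_trans (natDegree_add_le _ _)
    (max_le (by simp) (le_trans (natDegree_mul_le) (by simp)))

lemma Lop_CX (m : ℕ → ℝ) (a b : ℝ) : Lop m (C b + C a * X) = C (a * m 0) := by
  apply Polynomial.ext
  intro k
  match k with
  | 0 =>
    rw [coeff_Lop m _ 0 1 (by simpa using natDegree_CX_le a b)]
    simp
  | (k + 1) =>
    rw [coeff_Lop_zero m _ (k+1) (le_trans (natDegree_CX_le a b) (by omega))]
    simp [coeff_C]

lemma rec_of_key (m : ℕ → ℝ) (P : ℕ → Polynomial ℝ)
    (hnd : ∀ r, (P r).natDegree = r) (hlc : ∀ r, (P r).coeff r ≠ 0)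
    (hm0 : m 0 = 1) (hm1 : m 1 = 0)
    (hkey : ∀ r : ℕ, 3 ≤ r →
      (Lop m (P r)).coeff 0 = (Lop m (Lop m (P r))).coeff 1 + (P r).coeff 1) :
    ∀ n : ℕ, 2 ≤ n → m n = ∑ i ∈ Finset.range (n - 1), m i * m (n - 2 - i) := by
  intro n
  induction n using Nat.strong_induction_on with
  | _ n ih =>
    match n with
    | 0 => omega
    | 1 => omega
    | (t + 2) =>
      intro _
      set c : ℕ → ℝ := fun j => (P (t + 3)).coeff j with hc
      -- A : coeff 0 of L P
      have hA : (Lop m (P (t+3))).coeff 0 = ∑ j ∈ Finset.range (t + 3), c (1 + j) * m j :=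
        coeff_Lop m (P (t+3)) 0 (t+3) (by rw [hnd]; omega)
      have hA2 : ∑ j ∈ Finset.range (t + 3), c (1 + j) * m j
          = (∑ j ∈ Finset.range (t+1), c (3 + j) * m (2 + j)) + c 1 := by
        rw [Finset.sum_range_succ' (fun j => c (1 + j) * m j) (t+2),
          Finset.sum_range_succ' (fun j => c (1 + (j+1)) * m (j+1)) (t+1)]
        have e : ∀ j ∈ Finset.range (t+1), c (1 + (j + 1 + 1)) * m (j + 1 + 1)
            = c (3 + j) * m (2 + j) := by
          intro j _
          rw [show 1 + (j + 1 + 1) = 3 + j by omega, show j + 1 + 1 = 2 + j by omega]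
        rw [Finset.sum_congr rfl e]
        simp [hm0, hm1]
      -- B : coeff 1 of L L P
      have hLnd : (Lop m (P (t+3))).natDegree ≤ t + 3 := le_trans (natDegree_Lop_le _ _) (by rw [hnd])
      have hB : (Lop m (Lop m (P (t+3)))).coeff 1
          = ∑ j ∈ Finset.range (t+2), (Lop m (P (t+3))).coeff (2 + j) * m j :=
        coeff_Lop m _ 1 (t+2) (by omega)
      have hBin : ∀ j, (Lop m (P (t+3))).coeff (2 + j)
          = ∑ i ∈ Finset.range (t+2), c (3 + j + i) * m i := by
        intro j
        rw [coeff_Lop m (P (t+3)) (2+j) (t+2) (by rw [hnd]; omega)]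
        apply Finset.sum_congr rfl
        intro i _
        rw [show 2 + j + 1 + i = 3 + j + i by omega]
      have hB2 : (Lop m (Lop m (P (t+3)))).coeff 1
          = ∑ j ∈ Finset.range (t+2), ∑ i ∈ Finset.range (t+2), c (3 + j + i) * (m i * m j) := by
        rw [hB, Finset.sum_congr rfl (fun j _ => by rw [hBin j, Finset.sum_mul])]
        apply Finset.sum_congr rfl; intro j _
        apply Finset.sum_congr rfl; intro i _
        ring
      have hconv : ∑ j ∈ Finset.range (t+2), ∑ i ∈ Finset.range (t+2), c (3 + j + i) * (m i * m j)
          = ∑ s ∈ Finset.range (t+1), c (3 + s) * ∑ i ∈ Finset.range (s + 1), m i * m (s - i) := by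
        have := conv_sum c m (t+2) (by omega) (fun s hs => by
          apply coeff_eq_zero_of_natDegree_lt
          rw [hnd]; omega)
        rw [this, show t + 2 - 1 = t + 1 by omega]
      -- the key equation
      have hk := hkey (t+3) (by omega)
      rw [hA, hA2, hB2, hconv] at hk
      have hsum : ∑ s ∈ Finset.range (t+1),
          c (3 + s) * (m (2 + s) - ∑ i ∈ Finset.range (s + 1), m i * m (s - i)) = 0 := by
        have : ∀ s ∈ Finset.range (t+1),
            c (3 + s) * (m (2 + s) - ∑ i ∈ Finset.range (s + 1), m i * m (s - i))
            = c (3 + s) * m (2 + s) - c (3 + s) * ∑ i ∈ Finset.range (s + 1), m i * m (s - i) := by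
          intro s _; ring
        rw [Finset.sum_congr rfl this, Finset.sum_sub_distrib]
        have := hk
        linarith [hk]
      -- use IH to kill terms s < t
      have hzero : ∀ s ∈ Finset.range t,
          c (3 + s) * (m (2 + s) - ∑ i ∈ Finset.range (s + 1), m i * m (s - i)) = 0 := by
        intro s hs
        rw [Finset.mem_range] at hs
        have h2 := ih (s + 2) (by omega) (by omega)
        have : m (2 + s) = ∑ i ∈ Finset.range (s + 1), m i * m (s - i) := by
          rw [show 2 + s = s + 2 by omega, h2, show s + 2 - 1 = s + 1 by omega]
          apply Finset.sum_congr rfl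
          intro i _
          rw [show s + 2 - 2 - i = s - i by omega]
        rw [this]; ring
      rw [Finset.sum_range_succ, Finset.sum_eq_zero hzero, zero_add] at hsum
      have hct : c (3 + t) ≠ 0 := by
        rw [show 3 + t = t + 3 by omega]; exact hlc (t+3)
      have hfin : m (2 + t) = ∑ i ∈ Finset.range (t + 1), m i * m (t - i) := by
        rcases mul_eq_zero.mp hsum with h | h
        · exact absurd h hct
        · linarith [h]
      rw [show t + 2 = 2 + t by omega, hfin, show 2 + t - 1 = t + 1 by omega]
      apply Finset.sum_congr rfl
      intro i _
      rw [show 2 + t - 2 - i = t - i by omega]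


theorem stmt4 (μ : Measure ℝ) [IsProbabilityMeasure μ] (hcs : CompactSupp μ)
    (hmean : ∫ x, x ∂μ = 0) (hvar : ∫ x, x ^ 2 ∂μ = 1)
    (p q : Polynomial ℝ) (hpq : ¬ (p = 0 ∧ q = 0))
    (P : ℕ → Polynomial ℝ) (lam : ℕ → ℝ)
    (hdeg : ∀ n, (P n).degree = (n : WithBot ℕ))
    (heig : ∀ n, p * Lop (mom μ) (Lop (mom μ) (P n)) + q * Lop (mom μ) (P n) = lam n • P n)
    (horth : ∀ n m : ℕ, n ≠ m → ∫ x, (P n).eval x * (P m).eval x ∂μ = 0) :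
    ∃ a : ℝ, a ≠ 0 ∧ p = C a ∧ q = C (-a) * X ∧
      (∀ n : ℕ, 2 ≤ n → mom μ n = ∑ i ∈ Finset.range (n - 1), mom μ i * mom μ (n - 2 - i)) ∧
      (∀ k : ℕ, mom μ (2 * k) = (catalan k : ℝ) ∧ mom μ (2 * k + 1) = 0) := by
  open Polynomial MeasureTheory Finset in
  set m : ℕ → ℝ := mom μ with hm
  have hm0 : m 0 = 1 := by simp [hm, mom]
  have hm1 : m 1 = 0 := by simpa [hm, mom] using hmean
  have hm2 : m 2 = 1 := hvar
  have hnd : ∀ r, (P r).natDegree = r := fun r => natDegree_eq_of_degree_eq_some (hdeg r)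
  have hlc : ∀ r, (P r).coeff r ≠ 0 := fun r => coeff_ne_zero_of_eq_degree (hdeg r)
  -- P 0 is a nonzero constant
  have hP0 : P 0 = C ((P 0).coeff 0) := eq_C_of_degree_le_zero (le_of_eq (by simpa using hdeg 0))
  -- integral of P 1 and P 2 vanish
  have hint : ∀ r : ℕ, r ≠ 0 → ∫ x, (P r).eval x ∂μ = 0 := by
    intro r hr
    have h := horth r 0 hr
    have h2 : ∫ x, (P r).eval x * (P 0).coeff 0 ∂μ = 0 := by
      rw [← h]
      apply integral_congr_ae
      filter_upwards with x
      rw [hP0]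
      simp
    rw [integral_mul_const] at h2
    rcases mul_eq_zero.mp h2 with h3 | h3
    · exact h3
    · exact absurd h3 (hlc 0)
  have hphi : ∀ r : ℕ, ∫ x, (P r).eval x ∂μ
      = ∑ j ∈ Finset.range (r + 1), (P r).coeff j * m j := by
    intro r
    rw [integral_poly μ hcs (P r), hnd r]
  -- coeff 0 of P 1 vanishes
  have hc10 : (P 1).coeff 0 = 0 := by
    have h := hint 1 (by omega)
    rw [hphi 1] at h
    simp [Finset.sum_range_succ, hm0, hm1] at h
    exact h
  have hc20 : (P 2).coeff 0 = -(P 2).coeff 2 := by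
    have h := hint 2 (by omega)
    rw [hphi 2] at h
    simp [Finset.sum_range_succ, hm0, hm1, hm2] at h
    linarith [h]
  -- structure of P 1
  set b1 : ℝ := (P 1).coeff 1 with hb1
  have hb1ne : b1 ≠ 0 := hlc 1
  have hP1 : P 1 = C b1 * X := by
    have := eq_X_add_C_of_natDegree_le_one (p := P 1) (by rw [hnd 1])
    rw [hc10, map_zero, add_zero] at this
    exact this
  -- q = C (lam 1) * X
  have hLP1 : Lop m (P 1) = C b1 := by
    have h01 : P 1 = C 0 + C b1 * X := by rw [hP1, map_zero, zero_add]
    rw [h01, Lop_CX, hm0, mul_one]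
  have hq : q = C (lam 1) * X := by
    have h := heig 1
    rw [hLP1, Lop_C, mul_zero, zero_add, hP1] at h
    have h2 : q * C b1 = (C (lam 1) * X) * C b1 := by
      rw [h, smul_eq_C_mul]; ring
    exact mul_right_cancel₀ (by simpa using hb1ne) h2
  -- structure of P 2 under L
  have hA2ne : (P 2).coeff 2 ≠ 0 := hlc 2
  have hLP2 : Lop m (P 2) = C ((P 2).coeff 1) + C ((P 2).coeff 2) * X := by
    apply Polynomial.ext
    intro k
    match k with
    | 0 =>
      rw [coeff_Lop m (P 2) 0 2 (by rw [hnd]; try omega)]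
      norm_num [Finset.sum_range_succ, hm0, hm1]
    | 1 =>
      rw [coeff_Lop m (P 2) 1 1 (by rw [hnd]; try omega)]
      norm_num [Finset.sum_range_succ, hm0]
    | (k + 2) =>
      rw [coeff_Lop_zero m (P 2) (k+2) (by rw [hnd]; try omega)]
      simp [coeff_C, coeff_X]
  have hLLP2 : Lop m (Lop m (P 2)) = C ((P 2).coeff 2) := by
    rw [hLP2, Lop_CX, hm0, mul_one]
  have hE2 : p * C ((P 2).coeff 2) + (C (lam 1) * X) * (C ((P 2).coeff 1) + C ((P 2).coeff 2) * X)
      = lam 2 • P 2 := by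
    rw [← hLP2, ← hLLP2, ← hq]
    exact heig 2
  have hY : (C (lam 1) * X) * (C ((P 2).coeff 1) + C ((P 2).coeff 2) * X)
      = C (lam 1 * (P 2).coeff 1) * X + C (lam 1 * (P 2).coeff 2) * X ^ 2 := by
    simp only [C_mul]; ring
  -- p has degree at most 2
  have hYco : ∀ k : ℕ, ((C (lam 1) * X) * (C ((P 2).coeff 1) + C ((P 2).coeff 2) * X)).coeff (k+3)
      = 0 := by
    intro k
    rw [hY, coeff_add, coeff_C_mul, coeff_C_mul, coeff_X, coeff_X_pow,
      if_neg (show ¬ (1 = k + 3) by omega), if_neg (show ¬ (k + 3 = 2) by omega),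
      mul_zero, mul_zero, add_zero]
  have hpco : ∀ k : ℕ, p.coeff (k + 3) = 0 := by
    intro k
    have e : (p * C ((P 2).coeff 2)
        + (C (lam 1) * X) * (C ((P 2).coeff 1) + C ((P 2).coeff 2) * X)).coeff (k+3)
        = (lam 2 • P 2).coeff (k+3) := by rw [hE2]
    rw [coeff_add, coeff_mul_C, hYco k, add_zero, coeff_smul, smul_eq_mul,
      coeff_eq_zero_of_natDegree_lt (show (P 2).natDegree < k + 3 by rw [hnd 2]; omega),
      mul_zero] at e
    rcases mul_eq_zero.mp e with h | h
    · exact h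
    · exact absurd h hA2ne
  have hpdeg : p.natDegree ≤ 2 := by
    rw [natDegree_le_iff_coeff_eq_zero]
    intro N hN
    obtain ⟨k, rfl⟩ : ∃ k, N = k + 3 := ⟨N - 3, by omega⟩
    exact hpco k
  -- relations from E2
  have r2 : p.coeff 2 * (P 2).coeff 2 + lam 1 * (P 2).coeff 2 = lam 2 * (P 2).coeff 2 := by
    have e : (p * C ((P 2).coeff 2)
        + (C (lam 1) * X) * (C ((P 2).coeff 1) + C ((P 2).coeff 2) * X)).coeff 2
        = (lam 2 • P 2).coeff 2 := by rw [hE2]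
    rw [coeff_add, coeff_mul_C, coeff_smul, smul_eq_mul, hY, coeff_add, coeff_C_mul,
      coeff_C_mul, coeff_X, coeff_X_pow] at e
    norm_num at e
    linear_combination e
  have r0 : p.coeff 0 * (P 2).coeff 2 = lam 2 * (-(P 2).coeff 2) := by
    have e : (p * C ((P 2).coeff 2)
        + (C (lam 1) * X) * (C ((P 2).coeff 1) + C ((P 2).coeff 2) * X)).coeff 0
        = (lam 2 • P 2).coeff 0 := by rw [hE2]
    rw [coeff_add, coeff_mul_C, coeff_smul, smul_eq_mul, hY, coeff_add, coeff_C_mul,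
      coeff_C_mul, coeff_X, coeff_X_pow, hc20] at e
    norm_num at e
    linear_combination e
  -- coefficients of L (P 4) and L (L (P 4))
  have hl3 : (Lop m (P 4)).coeff 3 = (P 4).coeff 4 := by
    rw [coeff_Lop m (P 4) 3 1 (by rw [hnd]; try omega)]
    norm_num [Finset.sum_range_succ, hm0]
  have hl2 : (Lop m (P 4)).coeff 2 = (P 4).coeff 3 := by
    rw [coeff_Lop m (P 4) 2 2 (by rw [hnd]; try omega)]
    norm_num [Finset.sum_range_succ, hm0, hm1]
  have hl1 : (Lop m (P 4)).coeff 1 = (P 4).coeff 2 + (P 4).coeff 4 := by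
    rw [coeff_Lop m (P 4) 1 3 (by rw [hnd]; try omega)]
    norm_num [Finset.sum_range_succ, hm0, hm1, hm2]
  have hl4 : (Lop m (P 4)).coeff 4 = 0 := coeff_Lop_zero m (P 4) 4 (by rw [hnd])
  have hLnd4 : (Lop m (P 4)).natDegree ≤ 4 := le_trans (natDegree_Lop_le _ _) (by rw [hnd])
  have hL2c2 : (Lop m (Lop m (P 4))).coeff 2 = (P 4).coeff 4 := by
    rw [coeff_Lop m _ 2 2 (by omega)]
    norm_num [Finset.sum_range_succ, hm0, hm1, hl3]
  have hL2c3 : (Lop m (Lop m (P 4))).coeff 3 = 0 := by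
    rw [coeff_Lop m _ 3 1 (by omega)]
    norm_num [Finset.sum_range_succ, hm0, hl4]
  have hL2c4 : (Lop m (Lop m (P 4))).coeff 4 = 0 := coeff_Lop_zero m _ 4 (by omega)
  have hL2c1 : (Lop m (Lop m (P 4))).coeff 1 = (P 4).coeff 3 := by
    rw [coeff_Lop m _ 1 3 (by omega)]
    norm_num [Finset.sum_range_succ, hm0, hm1, hm2, hl2, hl3, hl4]
  have hL2c0 : (Lop m (Lop m (P 4))).coeff 0 = (P 4).coeff 2 + 2 * (P 4).coeff 4 := by
    rw [coeff_Lop m _ 0 4 (by omega)]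
    norm_num [Finset.sum_range_succ, hm0, hm1, hm2, hl1, hl2, hl3, hl4]
    ring
  -- p as an explicit quadratic
  have hp3 : p = C (p.coeff 0) + C (p.coeff 1) * X + C (p.coeff 2) * X ^ 2 := by
    conv_lhs => rw [as_sum_range' p 3 (by omega)]
    rw [Finset.sum_range_succ, Finset.sum_range_succ, Finset.sum_range_succ]
    simp [← C_mul_X_pow_eq_monomial]
    try ring
  have hmul : ∀ (g : Polynomial ℝ) (k : ℕ), (p * g).coeff (k + 2)
      = p.coeff 0 * g.coeff (k + 2) + p.coeff 1 * g.coeff (k + 1) + p.coeff 2 * g.coeff k := by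
    intro g k
    have hg1 : ((X : Polynomial ℝ) * g).coeff (k + 2) = g.coeff (k + 1) := by
      rw [show k + 2 = (k + 1) + 1 by omega, coeff_X_mul]
    have hg2 : ((X : Polynomial ℝ) ^ 2 * g).coeff (k + 2) = g.coeff k := coeff_X_pow_mul g 2 k
    conv_lhs => rw [hp3]
    rw [add_mul, add_mul, coeff_add, coeff_add, coeff_C_mul, mul_assoc, coeff_C_mul,
      mul_assoc, coeff_C_mul, hg1, hg2]
  have hqmul : ∀ (g : Polynomial ℝ) (k : ℕ), ((C (lam 1) * X) * g).coeff (k + 1)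
      = lam 1 * g.coeff k := by
    intro g k
    rw [mul_assoc, coeff_C_mul, coeff_X_mul]
  have hE4 := heig 4
  rw [hq] at hE4
  -- coefficient 4 of E4
  have e4 : p.coeff 0 * 0 + p.coeff 1 * 0 + p.coeff 2 * (P 4).coeff 4
      + lam 1 * (P 4).coeff 4 = lam 4 * (P 4).coeff 4 := by
    have e : (p * Lop m (Lop m (P 4)) + C (lam 1) * X * Lop m (P 4)).coeff 4
        = (lam 4 • P 4).coeff 4 := by rw [hE4]
    have h1 := hmul (Lop m (Lop m (P 4))) 2
    norm_num at h1
    have h2 := hqmul (Lop m (P 4)) 3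
    norm_num at h2
    rw [coeff_add, coeff_smul, smul_eq_mul, h1, h2, hL2c4, hL2c3, hL2c2, hl3] at e
    linear_combination e
  have hlam4 : lam 4 = p.coeff 2 + lam 1 := by
    have h := mul_right_cancel₀ (hlc 4)
      (show (p.coeff 2 + lam 1) * (P 4).coeff 4 = lam 4 * (P 4).coeff 4 by linear_combination e4)
    linarith [h]
  -- coefficient 3 of E4
  have e3 : p.coeff 1 * (P 4).coeff 4 + p.coeff 2 * (P 4).coeff 3
      + lam 1 * (P 4).coeff 3 = lam 4 * (P 4).coeff 3 := by
    have e : (p * Lop m (Lop m (P 4)) + C (lam 1) * X * Lop m (P 4)).coeff 3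
        = (lam 4 • P 4).coeff 3 := by rw [hE4]
    have h1 := hmul (Lop m (Lop m (P 4))) 1
    norm_num at h1
    have h2 := hqmul (Lop m (P 4)) 2
    norm_num at h2
    rw [coeff_add, coeff_smul, smul_eq_mul, h1, h2, hL2c3, hL2c2, hL2c1, hl2] at e
    linear_combination e
  have hp1 : p.coeff 1 = 0 := by
    rw [hlam4] at e3
    have h2 : p.coeff 1 * (P 4).coeff 4 = 0 * (P 4).coeff 4 := by linear_combination e3
    exact mul_right_cancel₀ (hlc 4) h2
  -- coefficient 2 of E4
  have e2 : p.coeff 0 * (P 4).coeff 4 + p.coeff 1 * (P 4).coeff 3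
      + p.coeff 2 * ((P 4).coeff 2 + 2 * (P 4).coeff 4)
      + lam 1 * ((P 4).coeff 2 + (P 4).coeff 4) = lam 4 * (P 4).coeff 2 := by
    have e : (p * Lop m (Lop m (P 4)) + C (lam 1) * X * Lop m (P 4)).coeff 2
        = (lam 4 • P 4).coeff 2 := by rw [hE4]
    have h1 := hmul (Lop m (Lop m (P 4))) 0
    norm_num at h1
    have h2 := hqmul (Lop m (P 4)) 1
    norm_num at h2
    rw [coeff_add, coeff_smul, smul_eq_mul, h1, h2, hL2c2, hL2c1, hL2c0, hl1] at e
    linear_combination e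
  have hsum0 : p.coeff 0 + 2 * p.coeff 2 + lam 1 = 0 := by
    rw [hlam4, hp1] at e2
    have h2 : (p.coeff 0 + 2 * p.coeff 2 + lam 1) * (P 4).coeff 4 = 0 * (P 4).coeff 4 := by
      linear_combination e2
    have h := mul_right_cancel₀ (hlc 4) h2
    linarith [h]
  -- solve: lam 2 = lam 1, p.coeff 2 = 0, p.coeff 0 = - lam 1
  have hr2' : p.coeff 2 = lam 2 - lam 1 := by
    have h := mul_right_cancel₀ hA2ne
      (show (p.coeff 2) * (P 2).coeff 2 = (lam 2 - lam 1) * (P 2).coeff 2 by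
        linear_combination r2)
    linarith [h]
  have hr0' : p.coeff 0 = -lam 2 := by
    have h := mul_right_cancel₀ hA2ne
      (show (p.coeff 0) * (P 2).coeff 2 = (-lam 2) * (P 2).coeff 2 by linear_combination r0)
    linarith [h]
  have hlam21 : lam 2 = lam 1 := by linarith [hsum0, hr2', hr0']
  have hp2 : p.coeff 2 = 0 := by rw [hr2', hlam21]; ring
  have hp0 : p.coeff 0 = -lam 1 := by rw [hr0', hlam21]
  have hp : p = C (-lam 1) := by
    rw [hp3, hp1, hp2, hp0]
    simp
  have ha : lam 1 ≠ 0 := by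
    intro h0
    apply hpq
    constructor
    · rw [hp, h0, neg_zero, map_zero]
    · rw [hq, h0, map_zero, zero_mul]
  -- all eigenvalues for r >= 1 equal lam 1
  have hlamr : ∀ s : ℕ, lam (s + 1) = lam 1 := by
    intro s
    have hE := heig (s + 1)
    rw [hq, hp] at hE
    have e : (C (-lam 1) * Lop m (Lop m (P (s+1))) + C (lam 1) * X * Lop m (P (s+1))).coeff (s+1)
        = (lam (s+1) • P (s+1)).coeff (s+1) := by rw [hE]
    rw [coeff_add, coeff_smul, smul_eq_mul, coeff_C_mul] at e
    have hz : (Lop m (Lop m (P (s+1)))).coeff (s+1) = 0 :=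
      coeff_Lop_zero m _ (s+1) (le_trans (natDegree_Lop_le _ _) (by rw [hnd]))
    have hx : ((C (lam 1) * X) * Lop m (P (s+1))).coeff (s+1)
        = lam 1 * (Lop m (P (s+1))).coeff s := by
      rw [mul_assoc, coeff_C_mul, coeff_X_mul]
    have hls : (Lop m (P (s+1))).coeff s = (P (s+1)).coeff (s+1) := by
      rw [coeff_Lop m (P (s+1)) s 1 (by rw [hnd]; try omega)]
      norm_num [Finset.sum_range_succ, hm0]
    rw [hx, hz, hls, mul_zero, zero_add] at e
    have h := mul_right_cancel₀ (hlc (s+1)) e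
    linarith [h]
  -- the key identity for the recurrence
  have hkey : ∀ r : ℕ, 3 ≤ r →
      (Lop m (P r)).coeff 0 = (Lop m (Lop m (P r))).coeff 1 + (P r).coeff 1 := by
    intro r hr
    obtain ⟨s, rfl⟩ : ∃ s, r = s + 1 := ⟨r - 1, by omega⟩
    have hE := heig (s + 1)
    rw [hq, hp, hlamr s] at hE
    have e : (C (-lam 1) * Lop m (Lop m (P (s+1))) + C (lam 1) * X * Lop m (P (s+1))).coeff 1
        = (lam 1 • P (s+1)).coeff 1 := by rw [hE]
    rw [coeff_add, coeff_smul, smul_eq_mul, coeff_C_mul] at e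
    have hx : ((C (lam 1) * X) * Lop m (P (s+1))).coeff 1
        = lam 1 * (Lop m (P (s+1))).coeff 0 := by
      rw [mul_assoc, coeff_C_mul]
      congr 1
      simpa using coeff_X_mul (Lop m (P (s+1))) 0
    rw [hx] at e
    have h := mul_left_cancel₀ ha
      (show lam 1 * ((Lop m (P (s+1))).coeff 0)
        = lam 1 * ((Lop m (Lop m (P (s+1)))).coeff 1 + (P (s+1)).coeff 1) by
        linear_combination e)
    exact h
  have hrec := rec_of_key m P hnd hlc hm0 hm1 hkey
  have hcat := catalan_of_rec m hm0 hm1 hrec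
  exact ⟨-lam 1, neg_ne_zero.mpr ha, hp, by rw [neg_neg, hq], hrec, hcat⟩
end

section
/- Let μ be a compactly supported probability measure on ℝ and let H ∈ L¹(μ) be a conjugate variable for μ, i.e. for every polynomial f ∈ ℝ[x], ∬ ∂f(x, y) dμ(x) dμ(y) = ∫ H f dμ. Then the operator A[f] = L_μ[f] − (1/2) H f is antisymmetric with respect to μ on polynomials: for all f, g ∈ ℝ[x], ∫ (L_μ[f] − (1/2) H f) g dμ = − ∫ f (L_μ[g] − (1/2) H g) dμ (so that i·A is symmetric). -/
open MeasureTheory Polynomial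

/-- The difference quotient `∂h(x,y)` of a polynomial, with `(∂h)(x,x) = h'(x)`. -/
noncomputable def pdq (h : Polynomial ℝ) (x y : ℝ) : ℝ :=
  if x = y then (Polynomial.derivative h).eval x else (h.eval x - h.eval y) / (x - y)

/-! Apply the defining identity of the conjugate variable to `f * g`. By the Leibniz rule
`∂(fg)(x,y) = ∂f(x,y) g(x) + f(y) ∂g(x,y)`, the symmetry of `∂` and Fubini, its left side is
`∫ L_μ[f] g dμ + ∫ f L_μ[g] dμ`, because `∫ ∂h(x,y) dμ(y) = L_μ[h](x)` (checked on
monomials). So `∫ L_μ[f] g + ∫ f L_μ[g] = ∫ H f g`, which is the antisymmetry of `L_μ - H/2`. -/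

lemma pdq_add (f g : ℝ[X]) (x y : ℝ) : pdq (f + g) x y = pdq f x y + pdq g x y := by
  unfold pdq
  split_ifs
  · simp
  · simp only [eval_add]
    ring

lemma pdq_monomial (n : ℕ) (a x y : ℝ) :
    pdq (monomial n a) x y = a * ∑ k ∈ Finset.range n, x ^ k * y ^ (n - 1 - k) := by
  unfold pdq
  split_ifs with hxy
  · subst hxy
    have hpow : ∀ k ∈ Finset.range n, x ^ k * x ^ (n - 1 - k) = x ^ (n - 1) := fun k hk => by
      rw [← pow_add]
      congr 1
      have := Finset.mem_range.mp hk
      omega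
    rw [Finset.sum_congr rfl hpow]
    simp only [derivative_monomial, eval_monomial, Finset.sum_const, Finset.card_range,
      nsmul_eq_mul]
    ring
  · rw [div_eq_iff (sub_ne_zero.mpr hxy), mul_assoc, geom_sum₂_mul]
    simp [mul_sub]

lemma pdq_symm (f : ℝ[X]) (x y : ℝ) : pdq f x y = pdq f y x := by
  unfold pdq
  split_ifs with h h' h'
  · rw [h]
  · exact absurd h.symm h'
  · exact absurd h'.symm h
  · rw [← neg_sub (eval y f), ← neg_sub y, neg_div_neg_eq]

lemma pdq_mul (f g : ℝ[X]) (x y : ℝ) :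
    pdq (f * g) x y = pdq f x y * g.eval x + f.eval y * pdq g x y := by
  unfold pdq
  split_ifs with hxy
  · subst hxy
    simp
  · field_simp [sub_ne_zero.mpr hxy]
    simp only [eval_mul]
    ring

lemma continuous_pdq (f : ℝ[X]) : Continuous fun p : ℝ × ℝ => pdq f p.1 p.2 := by
  induction f using Polynomial.induction_on' with
  | add p q hp hq =>
    simp only [pdq_add]
    exact hp.add hq
  | monomial n a =>
    simp only [pdq_monomial]
    fun_prop

lemma continuous_pdq_right (f : ℝ[X]) (x : ℝ) : Continuous (pdq f x) :=
  (continuous_pdq f).comp (.prodMk_right x)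

lemma Lop_add (m : ℕ → ℝ) (f g : ℝ[X]) : Lop m (f + g) = Lop m f + Lop m g :=
  Polynomial.sum_add_index _ _ _ (by simp) (by simp [add_mul])

lemma Lop_monomial (m : ℕ → ℝ) (n : ℕ) (a : ℝ) :
    Lop m (monomial n a) = C a * ∑ k ∈ Finset.range n, C (m (n - 1 - k)) * X ^ k :=
  Polynomial.sum_monomial_index a _ (by simp)

section CompactlySupported

variable {α : Type*} [TopologicalSpace α] [MeasurableSpace α] {μ : Measure α} {K : Set α}

lemma Continuous.integrable_of_ae_mem_isCompact [OpensMeasurableSpace α] [T2Space α]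
    [IsFiniteMeasure μ] (hK : IsCompact K) (hμK : ∀ᵐ x ∂μ, x ∈ K)
    {φ : α → ℝ} (hφ : Continuous φ) : Integrable φ μ := by
  have := hφ.continuousOn.integrableOn_compact (μ := μ) hK
  rwa [IntegrableOn, Measure.restrict_eq_self_of_ae_mem hμK] at this

lemma MeasureTheory.Integrable.mul_continuous_of_ae_mem_isCompact [OpensMeasurableSpace α]
    (hK : IsCompact K) (hμK : ∀ᵐ x ∂μ, x ∈ K)
    {H φ : α → ℝ} (hH : Integrable H μ) (hφ : Continuous φ) :
    Integrable (fun x => H x * φ x) μ := by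
  obtain ⟨c, hc⟩ := hK.exists_bound_of_continuousOn hφ.continuousOn
  exact hH.mul_bdd hφ.aestronglyMeasurable (hμK.mono hc)

end CompactlySupported

lemma CompactSupp.exists_isCompact_ae_mem {μ : Measure ℝ} (hμ : CompactSupp μ) :
    ∃ K, IsCompact K ∧ ∀ᵐ x ∂μ, x ∈ K :=
  let ⟨K, hK, hKc⟩ := hμ
  ⟨K, hK, measure_eq_zero_iff_ae_notMem.mp hKc |>.mono fun _ hx => not_not.mp hx⟩

section Conjugate

variable {μ : Measure ℝ} [IsFiniteMeasure μ] {K : Set ℝ}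

lemma integral_pdq_eq_eval_Lop (hK : IsCompact K) (hμK : ∀ᵐ x ∂μ, x ∈ K) (f : ℝ[X])
    (x : ℝ) :
    ∫ y, pdq f x y ∂μ = (Lop (mom μ) f).eval x := by
  have hInt : ∀ {φ : ℝ → ℝ}, Continuous φ → Integrable φ μ :=
    Continuous.integrable_of_ae_mem_isCompact hK hμK
  induction f using Polynomial.induction_on' with
  | add p q hp hq =>
    simp only [pdq_add, Lop_add, eval_add]
    rw [integral_add (hInt (continuous_pdq_right p x)) (hInt (continuous_pdq_right q x)), hp, hq]
  | monomial n a =>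
    simp only [pdq_monomial, Lop_monomial, eval_mul, eval_C, eval_finsetSum, eval_pow, eval_X,
      mom]
    rw [integral_const_mul, integral_finsetSum _ fun k _ => hInt (by fun_prop)]
    congr 1
    refine Finset.sum_congr rfl fun k _ => ?_
    rw [integral_const_mul, mul_comm]

lemma integral_integral_pdq_mul (hK : IsCompact K) (hμK : ∀ᵐ x ∂μ, x ∈ K) (f g : ℝ[X]) :
    ∫ x, ∫ y, pdq (f * g) x y ∂μ ∂μ
      = ∫ x, (Lop (mom μ) f).eval x * g.eval x ∂μ
        + ∫ x, f.eval x * (Lop (mom μ) g).eval x ∂μ := by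
  have hμKK : ∀ᵐ p ∂μ.prod μ, p ∈ K ×ˢ K :=
    (Measure.quasiMeasurePreserving_fst.ae hμK).and (Measure.quasiMeasurePreserving_snd.ae hμK)
  have hInt₂ : ∀ {φ : ℝ × ℝ → ℝ}, Continuous φ → Integrable φ (μ.prod μ) :=
    Continuous.integrable_of_ae_mem_isCompact (hK.prod hK) hμKK
  have h₁ : Integrable (fun z : ℝ × ℝ => pdq f z.1 z.2 * g.eval z.1) (μ.prod μ) :=
    hInt₂ ((continuous_pdq f).mul (by fun_prop))
  have h₂ : Integrable (fun z : ℝ × ℝ => f.eval z.2 * pdq g z.1 z.2) (μ.prod μ) :=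
    hInt₂ ((by fun_prop : Continuous fun z : ℝ × ℝ => f.eval z.2).mul (continuous_pdq g))
  calc ∫ x, ∫ y, pdq (f * g) x y ∂μ ∂μ
      = ∫ z, pdq f z.1 z.2 * g.eval z.1 + f.eval z.2 * pdq g z.1 z.2 ∂μ.prod μ := by
        simp only [pdq_mul]
        exact integral_integral (h₁.add h₂)
    _ = ∫ x, ∫ y, pdq f x y * g.eval x ∂μ ∂μ
          + ∫ y, ∫ x, f.eval y * pdq g x y ∂μ ∂μ := by
        rw [integral_add h₁ h₂, integral_prod _ h₁, integral_prod_symm _ h₂]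
    _ = _ := by
        congr 1 <;> refine integral_congr_ae (.of_forall fun x => ?_)
        · simp only [integral_mul_const, integral_pdq_eq_eval_Lop hK hμK]
        · simp only [integral_const_mul, pdq_symm g _ x, integral_pdq_eq_eval_Lop hK hμK]

end Conjugate

theorem stmt8 (μ : Measure ℝ) [IsProbabilityMeasure μ] (hcs : CompactSupp μ)
    (H : ℝ → ℝ) (hH : Integrable H μ)
    (hconj : ∀ f : Polynomial ℝ,
      ∫ x, (∫ y, pdq f x y ∂μ) ∂μ = ∫ x, H x * f.eval x ∂μ) :
    ∀ f g : Polynomial ℝ,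
      ∫ x, ((Lop (mom μ) f).eval x - (1 / 2) * H x * f.eval x) * g.eval x ∂μ
        = -∫ x, f.eval x * ((Lop (mom μ) g).eval x - (1 / 2) * H x * g.eval x) ∂μ := by
  intro f g
  obtain ⟨K, hK, hμK⟩ := hcs.exists_isCompact_ae_mem
  have hInt : ∀ {φ : ℝ → ℝ}, Continuous φ → Integrable φ μ :=
    Continuous.integrable_of_ae_mem_isCompact hK hμK
  have hHfg := (hH.mul_continuous_of_ae_mem_isCompact hK hμK (f * g).continuous).const_mul (1 / 2)
  have hsum := (integral_integral_pdq_mul hK hμK f g).symm.trans (hconj (f * g))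
  have hlhs : ∫ x, ((Lop (mom μ) f).eval x - 1 / 2 * H x * f.eval x) * g.eval x ∂μ
      = ∫ x, (Lop (mom μ) f).eval x * g.eval x ∂μ
        - 1 / 2 * ∫ x, H x * (f * g).eval x ∂μ := by
    rw [← integral_const_mul, ← integral_sub (hInt (by fun_prop)) hHfg]
    congr 1 with x
    simp only [eval_mul]
    ring
  have hrhs : ∫ x, f.eval x * ((Lop (mom μ) g).eval x - 1 / 2 * H x * g.eval x) ∂μ
      = ∫ x, f.eval x * (Lop (mom μ) g).eval x ∂μ
        - 1 / 2 * ∫ x, H x * (f * g).eval x ∂μ := by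
    rw [← integral_const_mul, ← integral_sub (hInt (by fun_prop)) hHfg]
    congr 1 with x
    simp only [eval_mul]
    ring
  rw [hlhs, hrhs]
  linarith
end
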